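/- arXiv:1104.5051 — 4 statements merged into one kernel-verified Lean document; each statement's English description precedes it below -/
import Mathlib

section
/- Let 0 → A → Bᵢ → Cᵢ → 0 (i = 1,2) be short exact sequences of abelian groups where each Cᵢ has no 2-torsion, and suppose given homomorphisms B₁ → B₂ and C₁ → C₂ commuting with the maps from A and the projections. Then the induced map B₁/2B₁ → C₁/2C₁ ⊕ B₂/2B₂ is injective. -/
def doubleHom (A : Type*) [AddCommGroup A] : A →+ A where
  toFun a := a + a
  map_zero' := by simp
  map_add' x y := by abel

lemma doubleHom_le {A B : Type*} [AddCommGroup A] [AddCommGroup B] (f : A →+ B) :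
    (doubleHom A).range ≤ ((doubleHom B).range.comap f) := by
  rintro x ⟨a, rfl⟩
  exact ⟨f a, by simp [doubleHom]⟩

/-! The idea: if `b ∈ B₁` becomes divisible by two both in `C₁` and in `B₂`, lift a half of
`c₁ b` to `b' ∈ B₁`; then `b - 2b'` comes from some `a ∈ A`. The image of `a` in `B₂` is
divisible by two, and since `C₂` has no 2-torsion, a half of it again lies in `A`, so `a` is
itself divisible by two and hence so is `b`. -/

section

variable {A B C : Type*} [AddCommGroup A] [AddCommGroup B] [AddCommGroup C]

@[simp]
lemma doubleHom_apply (a : A) : doubleHom A a = a + a := rfl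

lemma mem_doubleHom_range_of_map_mem {f : A →+ B} {c : B →+ C} (hf : Function.Injective f)
    (hex : f.range = c.ker) (hC : ∀ z : C, z + z = 0 → z = 0) {a : A}
    (ha : f a ∈ (doubleHom B).range) : a ∈ (doubleHom A).range := by
  obtain ⟨x, hx⟩ := ha
  rw [doubleHom_apply] at hx
  have hcx : c x = 0 := by
    apply hC
    have hfa : f a ∈ c.ker := hex ▸ ⟨a, rfl⟩
    rwa [AddMonoidHom.mem_ker, ← hx, map_add] at hfa
  obtain ⟨a', rfl⟩ : x ∈ f.range := hex ▸ hcx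
  exact ⟨a', hf (by rw [doubleHom_apply, map_add, hx])⟩

end

lemma mem_doubleHom_range_of_map_mem_of_map_mem {A B₁ C₁ B₂ C₂ : Type*} [AddCommGroup A]
    [AddCommGroup B₁] [AddCommGroup C₁] [AddCommGroup B₂] [AddCommGroup C₂]
    {f₁ : A →+ B₁} {c₁ : B₁ →+ C₁} {f₂ : A →+ B₂} {c₂ : B₂ →+ C₂} {g : B₁ →+ B₂}
    (hc₁ : Function.Surjective c₁) (hex₁ : f₁.range = c₁.ker)
    (hf₂ : Function.Injective f₂) (hex₂ : f₂.range = c₂.ker)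
    (hC₂ : ∀ z : C₂, z + z = 0 → z = 0) (hcomm : g.comp f₁ = f₂) {b : B₁}
    (hcb : c₁ b ∈ (doubleHom C₁).range) (hgb : g b ∈ (doubleHom B₂).range) :
    b ∈ (doubleHom B₁).range := by
  obtain ⟨z, hz⟩ := hcb
  obtain ⟨b', rfl⟩ := hc₁ z
  have hker : b - (b' + b') ∈ c₁.ker := by
    rw [AddMonoidHom.mem_ker, map_sub, ← hz, doubleHom_apply, map_add, sub_self]
  obtain ⟨a, ha⟩ : b - (b' + b') ∈ f₁.range := hex₁ ▸ hker
  have hf₂a : f₂ a ∈ (doubleHom B₂).range := by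
    rw [← hcomm, AddMonoidHom.comp_apply, ha, map_sub]
    exact sub_mem hgb ⟨g b', by simp⟩
  have hf₁a := doubleHom_le f₁ (mem_doubleHom_range_of_map_mem hf₂ hex₂ hC₂ hf₂a)
  rw [AddSubgroup.mem_comap, ha] at hf₁a
  simpa using add_mem hf₁a ⟨b', rfl⟩

theorem stmt2_general {A B₁ C₁ B₂ C₂ : Type*} [AddCommGroup A] [AddCommGroup B₁] [AddCommGroup C₁]
    [AddCommGroup B₂] [AddCommGroup C₂]
    (f₁ : A →+ B₁) (c₁ : B₁ →+ C₁) (f₂ : A →+ B₂) (c₂ : B₂ →+ C₂)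
    (g : B₁ →+ B₂)
    (hc₁ : Function.Surjective c₁) (hex₁ : f₁.range = c₁.ker)
    (hf₂ : Function.Injective f₂) (hex₂ : f₂.range = c₂.ker)
    (hC₂ : ∀ c : C₂, c + c = 0 → c = 0)
    (hcomm₁ : g.comp f₁ = f₂) :
    Function.Injective
      (fun x : B₁ ⧸ (doubleHom B₁).range =>
        ((QuotientAddGroup.map (doubleHom B₁).range (doubleHom C₁).range c₁ (doubleHom_le c₁)) x,
         (QuotientAddGroup.map (doubleHom B₁).range (doubleHom B₂).range g (doubleHom_le g)) x)) := by
  refine (injective_iff_map_eq_zero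
    ((QuotientAddGroup.map _ _ c₁ (doubleHom_le c₁)).prod
      (QuotientAddGroup.map _ _ g (doubleHom_le g)))).2 fun x hx => ?_
  induction x using QuotientAddGroup.induction_on with
  | H b =>
    simp only [AddMonoidHom.prod_apply, QuotientAddGroup.map_mk, Prod.mk_eq_zero,
      QuotientAddGroup.eq_zero_iff] at hx
    exact (QuotientAddGroup.eq_zero_iff b).2 <|
      mem_doubleHom_range_of_map_mem_of_map_mem hc₁ hex₁ hf₂ hex₂ hC₂ hcomm₁ hx.1 hx.2

/-- Abstract Lemma 4.3(c): given two short exact sequences `0 → A → Bᵢ → Cᵢ → 0`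
with `Cᵢ` 2-torsion-free and compatible maps `g : B₁ → B₂`, `h : C₁ → C₂`, the induced
map `B₁/2 → C₁/2 ⊕ B₂/2` is injective. -/
theorem stmt2 {A B₁ C₁ B₂ C₂ : Type*} [AddCommGroup A] [AddCommGroup B₁] [AddCommGroup C₁]
    [AddCommGroup B₂] [AddCommGroup C₂]
    (f₁ : A →+ B₁) (c₁ : B₁ →+ C₁) (f₂ : A →+ B₂) (c₂ : B₂ →+ C₂)
    (g : B₁ →+ B₂) (h : C₁ →+ C₂)
    (hf₁ : Function.Injective f₁) (hc₁ : Function.Surjective c₁) (hex₁ : f₁.range = c₁.ker)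
    (hf₂ : Function.Injective f₂) (hc₂ : Function.Surjective c₂) (hex₂ : f₂.range = c₂.ker)
    (hC₁ : ∀ c : C₁, c + c = 0 → c = 0) (hC₂ : ∀ c : C₂, c + c = 0 → c = 0)
    (hcomm₁ : g.comp f₁ = f₂) (hcomm₂ : h.comp c₁ = c₂.comp g) :
    Function.Injective
      (fun x : B₁ ⧸ (doubleHom B₁).range =>
        ((QuotientAddGroup.map (doubleHom B₁).range (doubleHom C₁).range c₁ (doubleHom_le c₁)) x,
         (QuotientAddGroup.map (doubleHom B₁).range (doubleHom B₂).range g (doubleHom_le g)) x)) :=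
  stmt2_general f₁ c₁ f₂ c₂ g hc₁ hex₁ hf₂ hex₂ hC₂ hcomm₁
end

section
/- In the setting of two short exact sequences 0 → A → B₁ → C₁ → 0 and 0 → A → B₂ → C₂ → 0 of abelian groups with C₁ and C₂ having no 2-torsion, and compatible maps g : B₁ → B₂, h : C₁ → C₂ as above: if b̄ ∈ B₂ and b ∈ B₁ satisfy [h(c₁(b))] = [c₂(b̄)] in C₂/2 (where cᵢ : Bᵢ → Cᵢ are the projections), then there exists b' ∈ B₁ with [c₁(b')] = [c₁(b)] in C₁/2 and [g(b')] = [b̄] in B₂/2. -/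
lemma doubleHom_range_le_map_of_surjective {B C : Type*} [AddCommGroup B] [AddCommGroup C]
    {c : B →+ C} (hc : Function.Surjective c) :
    (doubleHom C).range ≤ (doubleHom B).range.map c := by
  rintro _ ⟨d, rfl⟩
  obtain ⟨e, rfl⟩ := hc d
  exact ⟨e + e, ⟨e, rfl⟩, map_add c e e⟩

namespace AddMonoidHom

variable {A B₁ C₁ B₂ C₂ : Type*} [AddCommGroup A] [AddCommGroup B₁] [AddCommGroup C₁]
  [AddCommGroup B₂] [AddCommGroup C₂]

lemma exists_map_eq_and_mk'_eq_of_mk'_eq (c : B₂ →+ C₂) {S : AddSubgroup C₂}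
    {T : AddSubgroup B₂} (hST : S ≤ T.map c) {x : C₂} {y : B₂}
    (hxy : QuotientAddGroup.mk' S x = QuotientAddGroup.mk' S (c y)) :
    ∃ y' : B₂, c y' = x ∧ QuotientAddGroup.mk' T y' = QuotientAddGroup.mk' T y := by
  obtain ⟨_, hz, hxz⟩ := (QuotientAddGroup.mk'_eq_mk' S).mp hxy
  obtain ⟨t, ht, rfl⟩ := hST hz
  refine ⟨y - t, ?_, (QuotientAddGroup.mk'_eq_mk' T).mpr ⟨t, ht, sub_add_cancel y t⟩⟩
  rw [map_sub, ← hxz, add_sub_cancel_right]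

lemma exists_map_eq_of_map_eq_of_exact (f₁ : A →+ B₁) (c₁ : B₁ →+ C₁) (f₂ : A →+ B₂)
    (c₂ : B₂ →+ C₂) (g : B₁ →+ B₂) (h : C₁ →+ C₂)
    (hex₁ : f₁.range ≤ c₁.ker) (hex₂ : c₂.ker ≤ f₂.range)
    (hcomm₁ : g.comp f₁ = f₂) (hcomm₂ : h.comp c₁ = c₂.comp g)
    {b : B₁} {y : B₂} (hy : c₂ y = h (c₁ b)) :
    ∃ b' : B₁, c₁ b' = c₁ b ∧ g b' = y := by
  have hker : g b - y ∈ c₂.ker := by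
    rw [mem_ker, map_sub, hy, ← comp_apply c₂ g, ← hcomm₂, comp_apply, sub_self]
  obtain ⟨a, ha⟩ := hex₂ hker
  have hf₁a : c₁ (f₁ a) = 0 := hex₁ ⟨a, rfl⟩
  refine ⟨b - f₁ a, by rw [map_sub, hf₁a, sub_zero], ?_⟩
  rw [map_sub, ← comp_apply g f₁, hcomm₁, ha, sub_sub_cancel]

end AddMonoidHom

theorem stmt3_general {A B₁ C₁ B₂ C₂ : Type*} [AddCommGroup A] [AddCommGroup B₁] [AddCommGroup C₁]
    [AddCommGroup B₂] [AddCommGroup C₂]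
    (f₁ : A →+ B₁) (c₁ : B₁ →+ C₁) (f₂ : A →+ B₂) (c₂ : B₂ →+ C₂)
    (g : B₁ →+ B₂) (h : C₁ →+ C₂)
    (hex₁ : f₁.range = c₁.ker)
    (hc₂ : Function.Surjective c₂) (hex₂ : f₂.range = c₂.ker)
    (hcomm₁ : g.comp f₁ = f₂) (hcomm₂ : h.comp c₁ = c₂.comp g)
    (b : B₁) (bbar : B₂)
    (hbb : QuotientAddGroup.mk' (doubleHom C₂).range (h (c₁ b)) =
           QuotientAddGroup.mk' (doubleHom C₂).range (c₂ bbar)) :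
    ∃ b' : B₁,
      QuotientAddGroup.mk' (doubleHom C₁).range (c₁ b') =
        QuotientAddGroup.mk' (doubleHom C₁).range (c₁ b) ∧
      QuotientAddGroup.mk' (doubleHom B₂).range (g b') =
        QuotientAddGroup.mk' (doubleHom B₂).range bbar := by
  obtain ⟨y, hy, hybar⟩ :=
    c₂.exists_map_eq_and_mk'_eq_of_mk'_eq (doubleHom_range_le_map_of_surjective hc₂) hbb
  obtain ⟨b', hb'c, hb'g⟩ :=
    f₁.exists_map_eq_of_map_eq_of_exact c₁ f₂ c₂ g h hex₁.le hex₂.ge hcomm₁ hcomm₂ hy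
  exact ⟨b', congrArg _ hb'c, hb'g ▸ hybar⟩

/-- Abstract Lemma 4.3(d): in the setting of two short exact sequences `0 → A → Bᵢ → Cᵢ → 0`
with `Cᵢ` 2-torsion-free and compatible maps `g, h`: if `b̄ ∈ B₂` and `b ∈ B₁` satisfy
`[h (c₁ b)] = [c₂ b̄]` in `C₂/2`, then there is `b' ∈ B₁` with `[c₁ b'] = [c₁ b]` in `C₁/2`
and `[g b'] = [b̄]` in `B₂/2`. -/
theorem stmt3 {A B₁ C₁ B₂ C₂ : Type*} [AddCommGroup A] [AddCommGroup B₁] [AddCommGroup C₁]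
    [AddCommGroup B₂] [AddCommGroup C₂]
    (f₁ : A →+ B₁) (c₁ : B₁ →+ C₁) (f₂ : A →+ B₂) (c₂ : B₂ →+ C₂)
    (g : B₁ →+ B₂) (h : C₁ →+ C₂)
    (hf₁ : Function.Injective f₁) (hc₁ : Function.Surjective c₁) (hex₁ : f₁.range = c₁.ker)
    (hf₂ : Function.Injective f₂) (hc₂ : Function.Surjective c₂) (hex₂ : f₂.range = c₂.ker)
    (hC₁ : ∀ c : C₁, c + c = 0 → c = 0) (hC₂ : ∀ c : C₂, c + c = 0 → c = 0)
    (hcomm₁ : g.comp f₁ = f₂) (hcomm₂ : h.comp c₁ = c₂.comp g)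
    (b : B₁) (bbar : B₂)
    (hbb : QuotientAddGroup.mk' (doubleHom C₂).range (h (c₁ b)) =
           QuotientAddGroup.mk' (doubleHom C₂).range (c₂ bbar)) :
    ∃ b' : B₁,
      QuotientAddGroup.mk' (doubleHom C₁).range (c₁ b') =
        QuotientAddGroup.mk' (doubleHom C₁).range (c₁ b) ∧
      QuotientAddGroup.mk' (doubleHom B₂).range (g b') =
        QuotientAddGroup.mk' (doubleHom B₂).range bbar :=
  stmt3_general f₁ c₁ f₂ c₂ g h hex₁ hc₂ hex₂ hcomm₁ hcomm₂ b bbar hbb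
end

section
/- The square formed by the maps B₁/2 → C₁/2, B₁/2 → B₂/2, B₂/2 → C₂/2, C₁/2 → C₂/2 (induced from two short exact sequences 0 → A → Bᵢ → Cᵢ → 0 with Cᵢ 2-torsion-free and compatible maps B₁ → B₂, C₁ → C₂) is cartesian: B₁/2 is the pullback (fiber product) of C₁/2 and B₂/2 over C₂/2. -/
@[simp]
lemma doubleHom_apply_s4 {M : Type*} [AddCommGroup M] (m : M) : doubleHom M m = m + m := rfl

lemma mem_range_doubleHom {M : Type*} [AddCommGroup M] {m : M} :
    m ∈ (doubleHom M).range ↔ ∃ n, n + n = m := Iff.rfl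

lemma map_doubleHom_mk_eq_iff {M N : Type*} [AddCommGroup M] [AddCommGroup N] (f : M →+ N)
    (u v : M) :
    QuotientAddGroup.map _ _ f (doubleHom_le f) (u : M ⧸ (doubleHom M).range) =
        QuotientAddGroup.map _ _ f (doubleHom_le f) (v : M ⧸ (doubleHom M).range) ↔
      f (u - v) ∈ (doubleHom N).range := by
  rw [QuotientAddGroup.map_mk, QuotientAddGroup.map_mk, QuotientAddGroup.eq_iff_sub_mem,
    map_sub]

section ExactSquare

variable {A B₁ C₁ B₂ C₂ : Type*} [AddCommGroup A] [AddCommGroup B₁] [AddCommGroup C₁]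
  [AddCommGroup B₂] [AddCommGroup C₂]
  {f₁ : A →+ B₁} {c₁ : B₁ →+ C₁} {f₂ : A →+ B₂} {c₂ : B₂ →+ C₂} {g : B₁ →+ B₂} {h : C₁ →+ C₂}

lemma exists_lift_mod_doubles (hc₁ : Function.Surjective c₁) (hc₂ : Function.Surjective c₂)
    (hex₁ : Function.Exact f₁ c₁) (hex₂ : Function.Exact f₂ c₂)
    (hcomm₁ : ∀ a, g (f₁ a) = f₂ a) (hcomm₂ : ∀ b, h (c₁ b) = c₂ (g b))
    {c : C₁} {b₂ : B₂} (hcb : h c - c₂ b₂ ∈ (doubleHom C₂).range) :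
    ∃ b, c₁ b = c ∧ g b - b₂ ∈ (doubleHom B₂).range := by
  obtain ⟨z, hz⟩ := mem_range_doubleHom.mp hcb
  obtain ⟨w, rfl⟩ := hc₂ z
  obtain ⟨b₁, rfl⟩ := hc₁ c
  have hker : c₂ (g b₁ - b₂ - (w + w)) = 0 := by
    rw [map_sub, map_sub, map_add, ← hcomm₂, hz, sub_self]
  obtain ⟨a, ha⟩ := (hex₂ _).mp hker
  refine ⟨b₁ - f₁ a, by rw [map_sub, hex₁.apply_apply_eq_zero, sub_zero], w, ?_⟩
  rw [doubleHom_apply_s4, map_sub, hcomm₁, ha]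
  abel

lemma mem_range_doubleHom_of_map_mem (hc₁ : Function.Surjective c₁)
    (hex₁ : Function.Exact f₁ c₁) (hf₂ : Function.Injective f₂) (hex₂ : Function.Exact f₂ c₂)
    (hC₂ : ∀ c : C₂, c + c = 0 → c = 0) (hcomm₁ : ∀ a, g (f₁ a) = f₂ a) {u : B₁}
    (hu₁ : c₁ u ∈ (doubleHom C₁).range) (hu₂ : g u ∈ (doubleHom B₂).range) :
    u ∈ (doubleHom B₁).range := by
  obtain ⟨c, hc⟩ := mem_range_doubleHom.mp hu₁
  obtain ⟨v, hv⟩ := mem_range_doubleHom.mp hu₂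
  obtain ⟨b, rfl⟩ := hc₁ c
  obtain ⟨a, ha⟩ := (hex₁ (u - (b + b))).mp (by rw [map_sub, map_add, hc, sub_self])
  have hfa : f₂ a = (v - g b) + (v - g b) := by
    rw [← hcomm₁, ha, map_sub, map_add, ← hv]
    abel
  obtain ⟨a', ha'⟩ := (hex₂ (v - g b)).mp <| hC₂ _ <| by
    rw [← map_add, ← hfa, hex₂.apply_apply_eq_zero]
  have haa : a = a' + a' := hf₂ (by rw [hfa, map_add, ha'])
  refine ⟨b + f₁ a', ?_⟩
  rw [doubleHom_apply_s4, ← eq_sub_iff_add_eq.mp ha, haa, map_add]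
  abel

end ExactSquare

theorem stmt4_general {A B₁ C₁ B₂ C₂ : Type*} [AddCommGroup A] [AddCommGroup B₁] [AddCommGroup C₁]
    [AddCommGroup B₂] [AddCommGroup C₂]
    (f₁ : A →+ B₁) (c₁ : B₁ →+ C₁) (f₂ : A →+ B₂) (c₂ : B₂ →+ C₂)
    (g : B₁ →+ B₂) (h : C₁ →+ C₂)
    (hc₁ : Function.Surjective c₁) (hex₁ : f₁.range = c₁.ker)
    (hf₂ : Function.Injective f₂) (hc₂ : Function.Surjective c₂) (hex₂ : f₂.range = c₂.ker)
    (hC₂ : ∀ c : C₂, c + c = 0 → c = 0)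
    (hcomm₁ : g.comp f₁ = f₂) (hcomm₂ : h.comp c₁ = c₂.comp g) :
    ∀ (x : C₁ ⧸ (doubleHom C₁).range) (y : B₂ ⧸ (doubleHom B₂).range),
      (QuotientAddGroup.map (doubleHom C₁).range (doubleHom C₂).range h (doubleHom_le h)) x =
        (QuotientAddGroup.map (doubleHom B₂).range (doubleHom C₂).range c₂ (doubleHom_le c₂)) y →
      ∃! b : B₁ ⧸ (doubleHom B₁).range,
        (QuotientAddGroup.map (doubleHom B₁).range (doubleHom C₁).range c₁ (doubleHom_le c₁)) b = x ∧
        (QuotientAddGroup.map (doubleHom B₁).range (doubleHom B₂).range g (doubleHom_le g)) b = y := by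
  have exact₁ := AddMonoidHom.exact_iff.mpr hex₁.symm
  have exact₂ := AddMonoidHom.exact_iff.mpr hex₂.symm
  intro x y hxy
  induction x using QuotientAddGroup.induction_on with | H c => ?_
  induction y using QuotientAddGroup.induction_on with | H b₂ => ?_
  rw [QuotientAddGroup.map_mk, QuotientAddGroup.map_mk, QuotientAddGroup.eq_iff_sub_mem] at hxy
  obtain ⟨b, rfl, hb⟩ := exists_lift_mod_doubles hc₁ hc₂ exact₁ exact₂
    (DFunLike.congr_fun hcomm₁) (DFunLike.congr_fun hcomm₂) hxy
  have hgb : QuotientAddGroup.map _ _ g (doubleHom_le g) (b : B₁ ⧸ (doubleHom B₁).range) = b₂ :=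
    QuotientAddGroup.eq_iff_sub_mem.mpr hb
  refine ⟨b, ⟨QuotientAddGroup.map_mk .., hgb⟩, ?_⟩
  rintro b' ⟨hb'₁, hb'₂⟩
  induction b' using QuotientAddGroup.induction_on with | H u => ?_
  rw [← QuotientAddGroup.map_mk _ _ c₁ (doubleHom_le c₁) b, map_doubleHom_mk_eq_iff] at hb'₁
  rw [← hgb, map_doubleHom_mk_eq_iff] at hb'₂
  exact QuotientAddGroup.eq_iff_sub_mem.mpr <| mem_range_doubleHom_of_map_mem hc₁ exact₁ hf₂
    exact₂ hC₂ (DFunLike.congr_fun hcomm₁) hb'₁ hb'₂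

/-- The square `B₁/2 → C₁/2`, `B₁/2 → B₂/2`, `B₂/2 → C₂/2`, `C₁/2 → C₂/2` induced from two
short exact sequences `0 → A → Bᵢ → Cᵢ → 0` with `Cᵢ` 2-torsion-free and compatible maps is
cartesian: `B₁/2` is the fiber product of `C₁/2` and `B₂/2` over `C₂/2`, i.e. for every
compatible pair `(x, y)` there is a unique `b ∈ B₁/2` mapping to it. -/
theorem stmt4 {A B₁ C₁ B₂ C₂ : Type*} [AddCommGroup A] [AddCommGroup B₁] [AddCommGroup C₁]
    [AddCommGroup B₂] [AddCommGroup C₂]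
    (f₁ : A →+ B₁) (c₁ : B₁ →+ C₁) (f₂ : A →+ B₂) (c₂ : B₂ →+ C₂)
    (g : B₁ →+ B₂) (h : C₁ →+ C₂)
    (hf₁ : Function.Injective f₁) (hc₁ : Function.Surjective c₁) (hex₁ : f₁.range = c₁.ker)
    (hf₂ : Function.Injective f₂) (hc₂ : Function.Surjective c₂) (hex₂ : f₂.range = c₂.ker)
    (hC₁ : ∀ c : C₁, c + c = 0 → c = 0) (hC₂ : ∀ c : C₂, c + c = 0 → c = 0)
    (hcomm₁ : g.comp f₁ = f₂) (hcomm₂ : h.comp c₁ = c₂.comp g) :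
    ∀ (x : C₁ ⧸ (doubleHom C₁).range) (y : B₂ ⧸ (doubleHom B₂).range),
      (QuotientAddGroup.map (doubleHom C₁).range (doubleHom C₂).range h (doubleHom_le h)) x =
        (QuotientAddGroup.map (doubleHom B₂).range (doubleHom C₂).range c₂ (doubleHom_le c₂)) y →
      ∃! b : B₁ ⧸ (doubleHom B₁).range,
        (QuotientAddGroup.map (doubleHom B₁).range (doubleHom C₁).range c₁ (doubleHom_le c₁)) b = x ∧
        (QuotientAddGroup.map (doubleHom B₁).range (doubleHom B₂).range g (doubleHom_le g)) b = y :=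
  stmt4_general f₁ c₁ f₂ c₂ g h hc₁ hex₁ hf₂ hc₂ hex₂ hC₂ hcomm₁ hcomm₂
end

section
/- Let R be a commutative ring and L an invertible R-module. Then tensoring with L induces, for any invertible modules L₁, L₂, a bijection between isomorphism classes of alignments L₁ ⤳ L₂ and isomorphism classes of alignments L ⊗ L₁ ⤳ L ⊗ L₂. -/
open TensorProduct

/-- A (quadratic) alignment from an invertible module `L₁` to an invertible module `L₂` over a
commutative ring `R`: an invertible module `M` (with inverse `N`) together with an isomorphism
`φ : M ⊗ M ⊗ L₁ ≅ L₂`. -/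
structure QAlignment (R L₁ L₂ : Type) [CommRing R]
    [AddCommGroup L₁] [Module R L₁] [AddCommGroup L₂] [Module R L₂] where
  M : Type
  [iM : AddCommGroup M]
  [mM : Module R M]
  N : Type
  [iN : AddCommGroup N]
  [mN : Module R N]
  invOf : (TensorProduct R M N) ≃ₗ[R] R
  phi : (TensorProduct R (TensorProduct R M M) L₁) ≃ₗ[R] L₂

attribute [instance] QAlignment.iM QAlignment.mM QAlignment.iN QAlignment.mN

/-- Isomorphism of alignments (Definition 1.2). -/
def QAlignIso {R L₁ L₂ : Type} [CommRing R]
    [AddCommGroup L₁] [Module R L₁] [AddCommGroup L₂] [Module R L₂]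
    (A A' : QAlignment R L₁ L₂) : Prop :=
  ∃ τ : A.M ≃ₗ[R] A'.M,
    A'.phi.toLinearMap.comp
        (TensorProduct.congr (TensorProduct.congr τ τ) (LinearEquiv.refl R L₁)).toLinearMap =
      A.phi.toLinearMap

/-- Tensoring an alignment `(M, φ) : L₁ ⤳ L₂` with a module `L`, producing the alignment
`(M, id_L ⊗ φ ∘ (associativity/commutativity)) : L ⊗ L₁ ⤳ L ⊗ L₂`. -/
noncomputable def tensorQAlign (R L L₁ L₂ : Type) [CommRing R]
    [AddCommGroup L] [Module R L]
    [AddCommGroup L₁] [Module R L₁] [AddCommGroup L₂] [Module R L₂]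
    (A : QAlignment R L₁ L₂) :
    QAlignment R (TensorProduct R L L₁) (TensorProduct R L L₂) where
  M := A.M
  N := A.N
  invOf := A.invOf
  phi := (TensorProduct.leftComm R (TensorProduct R A.M A.M) L L₁).trans
      (TensorProduct.congr (LinearEquiv.refl R L) A.phi)

/-!
Since `L` is invertible, `f ↦ id_L ⊗ f` is a bijection `Hom(A, B) → Hom(L ⊗ A, L ⊗ B)`: up to the
symmetry of `⊗` it is `f ↦ f ⊗ id_L`, and `- ⊗ L` is an auto-equivalence of `R`-modules. By
functoriality it is then also a bijection on isomorphisms. The structure map of the tensored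
alignment is `id_L ⊗ φ` up to the fixed isomorphism `leftComm`, so an isomorphism `τ` of
alignments is the same datum before and after tensoring (injectivity), and every
`ψ : M ⊗ M ⊗ (L ⊗ L₁) ≅ L ⊗ L₂` is `(id_L ⊗ φ) ∘ leftComm` for some `φ` (surjectivity).
-/

namespace Module.Invertible

variable {R L : Type*} [CommSemiring R] [AddCommMonoid L] [Module R L] [Module.Invertible R L]
  {A B : Type*} [AddCommMonoid A] [Module R A] [AddCommMonoid B] [Module R B]

theorem bijective_lTensor : Function.Bijective (LinearMap.lTensor L : (A →ₗ[R] B) → _) := by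
  let e : L ⊗[R] Dual R L ≃ₗ[R] R := TensorProduct.comm R _ _ ≪≫ₗ linearEquiv R L
  have h : LinearMap.lTensor L = LinearEquiv.arrowCongr (TensorProduct.comm R A L)
      (TensorProduct.comm R B L) ∘ rTensorEquiv A B e := by
    funext f
    ext l a
    rfl
  rw [h]
  exact (LinearEquiv.bijective _).comp (LinearEquiv.bijective _)

theorem exists_linearEquiv_lTensor_eq (g : L ⊗[R] A ≃ₗ[R] L ⊗[R] B) :
    ∃ f : A ≃ₗ[R] B, f.lTensor L = g := by
  obtain ⟨f, hf⟩ := bijective_lTensor.2 g.toLinearMap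
  obtain ⟨f', hf'⟩ := bijective_lTensor.2 g.symm.toLinearMap
  have hff' : f ∘ₗ f' = .id :=
    bijective_lTensor (L := L) |>.1 <| by simp [LinearMap.lTensor_comp, hf, hf']
  have hf'f : f' ∘ₗ f = .id :=
    bijective_lTensor (L := L) |>.1 <| by simp [LinearMap.lTensor_comp, hf, hf']
  exact ⟨.ofLinearMap f f' hff' hf'f, LinearEquiv.toLinearMap_injective hf⟩

end Module.Invertible

section QAlignment

variable {R L L₁ L₂ : Type} [CommRing R] [AddCommGroup L] [Module R L]
  [AddCommGroup L₁] [Module R L₁] [AddCommGroup L₂] [Module R L₂]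

theorem qAlignIso_equivalence : Equivalence (QAlignIso (R := R) (L₁ := L₁) (L₂ := L₂)) where
  refl A := ⟨.refl R A.M, by simp⟩
  symm := by
    rintro A A' ⟨τ, hτ⟩
    refine ⟨τ.symm, ?_⟩
    rw [← hτ]
    ext
    simp
  trans := by
    rintro A A' A'' ⟨τ, hτ⟩ ⟨τ', hτ'⟩
    refine ⟨τ.trans τ', ?_⟩
    rw [← hτ, ← hτ']
    ext
    simp

theorem tensorQAlign_phi_comp_congr {A A' : QAlignment R L₁ L₂} (τ : A.M ≃ₗ[R] A'.M) :
    (tensorQAlign R L L₁ L₂ A').phi.toLinearMap ∘ₗ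
        (TensorProduct.congr (TensorProduct.congr τ τ) (.refl R (L ⊗[R] L₁))).toLinearMap =
      LinearMap.lTensor L (A'.phi.toLinearMap ∘ₗ
          (TensorProduct.congr (TensorProduct.congr τ τ) (.refl R L₁)).toLinearMap) ∘ₗ
        (TensorProduct.leftComm R (A.M ⊗[R] A.M) L L₁).toLinearMap := by
  ext
  rfl

theorem qAlignIso_tensorQAlign_iff [Module.Invertible R L] {A A' : QAlignment R L₁ L₂} :
    QAlignIso (tensorQAlign R L L₁ L₂ A) (tensorQAlign R L L₁ L₂ A') ↔ QAlignIso A A' := by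
  refine exists_congr fun τ : A.M ≃ₗ[R] A'.M => ?_
  refine (Eq.congr_left (tensorQAlign_phi_comp_congr τ)).trans ?_
  exact (LinearMap.cancel_right (TensorProduct.leftComm R (A.M ⊗[R] A.M) L L₁).surjective).trans
    (Module.Invertible.bijective_lTensor (L := L)).1.eq_iff

theorem exists_tensorQAlign_eq [Module.Invertible R L]
    (B : QAlignment R (L ⊗[R] L₁) (L ⊗[R] L₂)) : ∃ A, tensorQAlign R L L₁ L₂ A = B := by
  obtain ⟨M, N, invOf, ψ⟩ := B
  obtain ⟨φ, hφ⟩ := Module.Invertible.exists_linearEquiv_lTensor_eq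
    ((TensorProduct.leftComm R (M ⊗[R] M) L L₁).symm ≪≫ₗ ψ)
  refine ⟨⟨M, N, invOf, φ⟩, ?_⟩
  simp only [tensorQAlign, QAlignment.mk.injEq, heq_eq_eq, true_and]
  change (TensorProduct.leftComm R (M ⊗[R] M) L L₁).trans (φ.lTensor L) = ψ
  rw [hφ]
  ext
  simp

end QAlignment

/-- Lemma 1.6: if `L` is an invertible `R`-module, then tensoring with `L` induces a bijection
between isomorphism classes of alignments `L₁ ⤳ L₂` and isomorphism classes of alignments
`L ⊗ L₁ ⤳ L ⊗ L₂`. -/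
theorem stmt8 (R L L₁ L₂ : Type) [CommRing R]
    [AddCommGroup L] [Module R L]
    [AddCommGroup L₁] [Module R L₁] [AddCommGroup L₂] [Module R L₂]
    (NL : Type) [AddCommGroup NL] [Module R NL]
    (hL : Nonempty ((TensorProduct R L NL) ≃ₗ[R] R)) :
    ∃ F : Quot (QAlignIso (R := R) (L₁ := L₁) (L₂ := L₂)) →
        Quot (QAlignIso (R := R) (L₁ := TensorProduct R L L₁) (L₂ := TensorProduct R L L₂)),
      (∀ A : QAlignment R L₁ L₂,
          F (Quot.mk _ A) = Quot.mk _ (tensorQAlign R L L₁ L₂ A)) ∧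
      Function.Bijective F := by
  obtain ⟨e⟩ := hL
  have := Module.Invertible.left e
  refine ⟨Quot.lift (fun A => Quot.mk _ (tensorQAlign R L L₁ L₂ A))
      (fun _ _ h => Quot.sound (qAlignIso_tensorQAlign_iff.2 h)), fun _ => rfl, ?_, ?_⟩
  · rintro ⟨A⟩ ⟨A'⟩ h
    exact Quot.sound <| qAlignIso_tensorQAlign_iff.1 <|
      qAlignIso_equivalence.eqvGen_iff.1 (Quot.eqvGen_exact h)
  · rintro ⟨B⟩
    obtain ⟨A, rfl⟩ := exists_tensorQAlign_eq B
    exact ⟨Quot.mk _ A, rfl⟩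
end
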